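/- arXiv:2308.07422 — 2 statements merged into one kernel-verified Lean document; each statement's English description precedes it below -/
import Mathlib

section
/- The containment direction of the cycle ratio profile theorem: for every finite simple graph G with hom(C_4;G) ≠ 0, the point (hom(C_8;G)/hom(C_4;G)^2, ..., hom(C_{4ℓ};G)/hom(C_4;G)^ℓ) lies in Π_ℓ. Explicitly, there exist n and nonnegative reals x_1,...,x_n with Σ x_i = 1 such that hom(C_{4j};G)/hom(C_4;G)^j = Σ_i x_i^j for all 2 ≤ j ≤ ℓ. -/
open SimpleGraph

/-- The number of graph homomorphisms from `H` to `G`. -/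
noncomputable def homCount {α β : Type*} (H : SimpleGraph α) (G : SimpleGraph β) : ℕ :=
  Nat.card (H →g G)

/-!
Homomorphisms `C_k → G` are closed walks of length `k`, so `hom(C_k; G) = tr A^k = Σ_i λ_i^k`
for the adjacency matrix `A` of `G` (when `k ≥ 2`). In particular
`hom(C_{4j}; G) / hom(C_4; G)^j = Σ_i (λ_i^4 / Σ_k λ_k^4)^j`, and the weights `λ_i^4 / Σ_k λ_k^4`
are nonnegative and sum to `1`.
-/

open Matrix

namespace Matrix

variable {V R : Type*} [Fintype V] [DecidableEq V] [CommSemiring R]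

theorem pow_succ_apply_eq_sum_paths (A : Matrix V V R) (m : ℕ) (u v : V) :
    (A ^ (m + 1)) u v = ∑ f : Fin m → V,
      (∏ i : Fin m, A (vecCons u f i.castSucc) (vecCons u f i.succ)) *
        A (vecCons u f (Fin.last m)) v := by
  induction m generalizing u with
  | zero => simp
  | succ m ih =>
    rw [pow_succ', mul_apply, ← (Fin.consEquiv fun _ => V).sum_comp, Fintype.sum_prod_type]
    refine Finset.sum_congr rfl fun w _ => ?_
    simp [vecCons, ih, Finset.mul_sum, Fin.prod_univ_succ, mul_assoc]

theorem trace_pow_eq_sum_cycles (A : Matrix V V R) (n : ℕ) [NeZero n] :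
    (A ^ n).trace = ∑ f : Fin n → V, ∏ i, A (f i) (f (i + 1)) := by
  obtain ⟨m, rfl⟩ : ∃ m, n = m + 1 := Nat.exists_eq_succ_of_ne_zero (NeZero.ne n)
  rw [← (Fin.consEquiv fun _ => V).sum_comp, Fintype.sum_prod_type]
  refine Finset.sum_congr rfl fun u _ => ?_
  simp [vecCons, pow_succ_apply_eq_sum_paths, Fin.prod_univ_castSucc, Fin.coeSucc_eq_succ]

theorem IsHermitian.trace_pow_eq_sum_eigenvalues_pow {𝕜 : Type*} [RCLike 𝕜]
    {A : Matrix V V 𝕜} (hA : A.IsHermitian) (k : ℕ) :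
    (A ^ k).trace = ∑ i, (hA.eigenvalues i : 𝕜) ^ k := by
  conv_lhs => rw [hA.spectral_theorem, ← map_pow, Unitary.conjStarAlgAut_apply, trace_mul_cycle,
    Unitary.coe_star_mul_self, one_mul, diagonal_pow, trace_diagonal]
  simp

end Matrix

namespace SimpleGraph

theorem cycleGraph_adj_iff_eq_add_one {n : ℕ} {a b : Fin (n + 2)} :
    (cycleGraph (n + 2)).Adj a b ↔ a = b + 1 ∨ b = a + 1 := by
  rw [cycleGraph_eq_circulantGraph, circulantGraph_adj, add_comm b, add_comm a]
  simp only [Set.mem_singleton_iff, sub_eq_iff_eq_add, and_iff_right_iff_imp]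
  rintro (rfl | rfl) <;> simp

variable {V : Type*} (G : SimpleGraph V)

def cycleGraphHomEquiv (n : ℕ) :
    (cycleGraph (n + 2) →g G) ≃ {f : Fin (n + 2) → V // ∀ i, G.Adj (f i) (f (i + 1))} where
  toFun φ := ⟨φ, fun _ => φ.map_adj (cycleGraph_adj_iff_eq_add_one.mpr (Or.inr rfl))⟩
  invFun f := ⟨f.1, fun {a b} h => by
    rcases cycleGraph_adj_iff_eq_add_one.mp h with rfl | rfl
    exacts [(f.2 b).symm, f.2 a]⟩
  left_inv _ := rfl
  right_inv _ := rfl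

variable [Fintype V] [DecidableEq V] [DecidableRel G.Adj]

theorem homCount_cycleGraph_eq_trace_adjMatrix_pow {R : Type*} [CommSemiring R] (n : ℕ) :
    (homCount (cycleGraph (n + 2)) G : R) = ((G.adjMatrix R) ^ (n + 2)).trace := by
  rw [homCount, Nat.card_congr (G.cycleGraphHomEquiv n), Nat.card_eq_fintype_card,
    Fintype.card_subtype, trace_pow_eq_sum_cycles]
  simp [adjMatrix_apply, Finset.prod_boole, Finset.sum_boole]

theorem homCount_cycleGraph_eq_sum_eigenvalues_pow {k : ℕ} (hk : 2 ≤ k) :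
    (homCount (cycleGraph k) G : ℝ) = ∑ i, (G.isHermitian_adjMatrix ℝ).eigenvalues i ^ k := by
  obtain ⟨n, rfl⟩ := Nat.exists_eq_add_of_le' hk
  rw [homCount_cycleGraph_eq_trace_adjMatrix_pow,
    (G.isHermitian_adjMatrix ℝ).trace_pow_eq_sum_eigenvalues_pow]
  rfl

end SimpleGraph

theorem exists_fin_nonneg_sum_eq_one_sum_pow_eq {ι : Type*} [Fintype ι] (w : ι → ℝ)
    (hw : ∀ i, 0 ≤ w i) (hS : ∑ i, w i ≠ 0) :
    ∃ (n : ℕ) (x : Fin n → ℝ), (∀ i, 0 ≤ x i) ∧ ∑ i, x i = 1 ∧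
      ∀ j : ℕ, (∑ i, w i ^ j) / (∑ i, w i) ^ j = ∑ i, x i ^ j := by
  let e := Fintype.equivFin ι
  refine ⟨Fintype.card ι, fun i => w (e.symm i) / ∑ k, w k, fun i => ?_, ?_, fun j => ?_⟩
  · exact div_nonneg (hw _) (Finset.sum_nonneg fun k _ => hw k)
  · rw [← Finset.sum_div, e.symm.sum_comp, div_self hS]
  · simp_rw [div_pow, ← Finset.sum_div, e.symm.sum_comp (fun i => w i ^ j)]

theorem cycle_ratio_point_mem_powerSumProfile_general {V : Type*} [Fintype V]
    (G : SimpleGraph V) (h4 : homCount (cycleGraph 4) G ≠ 0) (ℓ : ℕ) :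
    ∃ (n : ℕ) (x : Fin n → ℝ), (∀ i, 0 ≤ x i) ∧ (∑ i, x i) = 1 ∧
      ∀ j : ℕ, 2 ≤ j → j ≤ ℓ →
        (homCount (cycleGraph (4 * j)) G : ℝ) / (homCount (cycleGraph 4) G : ℝ) ^ j =
          ∑ i, x i ^ j := by
  classical
  let w₄ i := (G.isHermitian_adjMatrix ℝ).eigenvalues i ^ 4
  have hC4 : (homCount (cycleGraph 4) G : ℝ) = ∑ i, w₄ i :=
    G.homCount_cycleGraph_eq_sum_eigenvalues_pow (k := 4) (by norm_num)
  obtain ⟨n, x, hx_nonneg, hx_sum, hx_pow⟩ := exists_fin_nonneg_sum_eq_one_sum_pow_eq w₄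
    (fun i => by positivity) (hC4 ▸ Nat.cast_ne_zero.mpr h4)
  refine ⟨n, x, hx_nonneg, hx_sum, fun j hj _ => ?_⟩
  rw [← hx_pow j, hC4, G.homCount_cycleGraph_eq_sum_eigenvalues_pow (by omega)]
  simp_rw [w₄, ← pow_mul]

/-- Containment direction of the cycle ratio profile theorem: for every finite simple graph
`G` with `hom(C_4;G) ≠ 0`, there exist `n` and nonnegative reals `x_1,…,x_n` summing to `1`
such that `hom(C_{4j};G)/hom(C_4;G)^j = Σ_i x_i^j` for all `2 ≤ j ≤ ℓ`. -/
theorem cycle_ratio_point_mem_powerSumProfile {V : Type*} [Fintype V]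
    (G : SimpleGraph V) (h4 : homCount (cycleGraph 4) G ≠ 0) (ℓ : ℕ) (hℓ : 2 ≤ ℓ) :
    ∃ (n : ℕ) (x : Fin n → ℝ), (∀ i, 0 ≤ x i) ∧ (∑ i, x i) = 1 ∧
      ∀ j : ℕ, 2 ≤ j → j ≤ ℓ →
        (homCount (cycleGraph (4 * j)) G : ℝ) / (homCount (cycleGraph 4) G : ℝ) ^ j =
          ∑ i, x i ^ j :=
  cycle_ratio_point_mem_powerSumProfile_general G h4 ℓ
end

section
/- For the usual star graphs (k = 2 case): the closure of the set of points ( hom(K_{1,2j};G)/hom(K_{1,2};G)^j )_{j=2,...,ℓ} over all finite simple graphs G with at least one edge equals the power-sum profile Π_ℓ. In particular, for every graph G with an edge there exist nonnegative reals x_v summing to 1 (namely x_v = d(v)^2/Σ_u d(u)^2) with hom(K_{1,2j};G)/hom(K_{1,2};G)^j = Σ_v x_v^j. -/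
open SimpleGraph

/-- The star `K_{1,b}` with `b` leaves. -/
def starGraph (b : ℕ) : SimpleGraph (Fin 1 ⊕ Fin b) := completeBipartiteGraph (Fin 1) (Fin b)

/-- The power-sum profile `Π_ℓ`. -/
def powerSumProfile (ℓ : ℕ) : Set (Fin (ℓ - 1) → ℝ) :=
  closure {v | ∃ (n : ℕ) (x : Fin n → ℝ), (∀ i, 0 ≤ x i) ∧ (∑ i, x i) = 1 ∧
    ∀ j : Fin (ℓ - 1), v j = ∑ i, x i ^ ((j : ℕ) + 2)}


/-!
Since `hom(K_{1,b}; G) = ∑_v d(v)^b`, the ratio `hom(K_{1,2j}; G) / hom(K_{1,2}; G)^j` is the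
`j`-th power sum of the probability vector `x_v = d(v)^2 / ∑_u d(u)^2`, so every ratio point lies
in `Π_ℓ`. Conversely, a disjoint union of stars with `m_i = ⌊t √x_i⌋` leaves has ratio points
`(∑ m_i^{2j} + ∑ m_i) / (∑ m_i^2 + ∑ m_i)^j`; the leaves contribute only lower-order terms, and as
`t → ∞` these points tend to `∑ x_i^j`.
-/

open Finset Filter Topology

section HomCount

variable {V : Type*} (G : SimpleGraph V)

def starHomEquiv (b : ℕ) :
    (_root_.starGraph b →g G) ≃ Σ v : V, Fin b → G.neighborSet v where
  toFun f := ⟨f (.inl 0), fun i => ⟨f (.inr i), f.map_adj (by simp [_root_.starGraph])⟩⟩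
  invFun p :=
    { toFun := Sum.elim (fun _ => p.1) (fun i => p.2 i)
      map_rel' := by
        rintro (a | a) (c | c) h <;> simp [_root_.starGraph] at h ⊢
        · exact (p.2 c).2
        · exact (p.2 a).2.symm }
  left_inv f := by
    ext (a | a)
    · rw [Subsingleton.elim a 0]; rfl
    · rfl
  right_inv _ := rfl

variable [Fintype V] [DecidableRel G.Adj]

theorem homCount_starGraph (b : ℕ) : homCount (_root_.starGraph b) G = ∑ v, G.degree v ^ b := by
  rw [homCount, Nat.card_congr (starHomEquiv G b), Nat.card_eq_fintype_card,
    Fintype.card_sigma]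
  simp only [Fintype.card_fun, Fintype.card_fin, card_neighborSet_eq_degree]

theorem edgeSet_nonempty_iff_sum_degree_pow_pos {k : ℕ} (hk : k ≠ 0) :
    G.edgeSet.Nonempty ↔ 0 < ∑ v, G.degree v ^ k := by
  simp only [sum_pos_iff, mem_univ, true_and, pow_pos_iff hk, degree_pos_iff_exists_adj]
  exact ⟨fun ⟨e, he⟩ => e.ind (fun v w h => ⟨v, w, h⟩) he,
    fun ⟨v, w, h⟩ => ⟨s(v, w), h⟩⟩

theorem homCount_starGraph_div_pow (j : ℕ) :
    (homCount (_root_.starGraph (2 * j)) G : ℝ) / (homCount (_root_.starGraph 2) G : ℝ) ^ j =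
      ∑ v, ((G.degree v : ℝ) ^ 2 / ∑ u, (G.degree u : ℝ) ^ 2) ^ j := by
  simp only [homCount_starGraph, Nat.cast_sum, Nat.cast_pow, sum_div, div_pow, pow_mul]

theorem sum_degree_sq_div_sum_eq_one (hG : G.edgeSet.Nonempty) :
    ∑ v, (G.degree v : ℝ) ^ 2 / ∑ u, (G.degree u : ℝ) ^ 2 = 1 := by
  have hpos := (edgeSet_nonempty_iff_sum_degree_pow_pos G two_ne_zero).1 hG
  rw [← sum_div, div_self (by exact_mod_cast hpos.ne')]

end HomCount

section StarForest

variable {α β : Type*} (f : β → α)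

/-- Each `a : α` is the centre of a star whose leaves are the fibre `f ⁻¹' {a} ⊆ β`. -/
def starForest : SimpleGraph (α ⊕ β) where
  Adj u v := u.isLeft ≠ v.isLeft ∧ Sum.elim id f u = Sum.elim id f v
  symm := ⟨fun _ _ h => ⟨h.1.symm, h.2.symm⟩⟩
  loopless := ⟨fun _ h => h.1 rfl⟩

instance [DecidableEq α] : DecidableRel (starForest f).Adj :=
  fun _ _ => instDecidableAnd

variable [Fintype α] [Fintype β] [DecidableEq α]

lemma degree_starForest_inl (a : α) : (starForest f).degree (.inl a) = #{b | f b = a} := by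
  rw [← card_neighborFinset_eq_degree, neighborFinset_eq_filter, card_filter, card_filter,
    Fintype.sum_sum_type]
  simp [starForest, eq_comm]

lemma degree_starForest_inr (b : β) : (starForest f).degree (.inr b) = 1 := by
  rw [← card_neighborFinset_eq_degree, neighborFinset_eq_filter, card_filter,
    Fintype.sum_sum_type]
  simp [starForest]

lemma sum_degree_pow_starForest (k : ℕ) :
    ∑ v, (starForest f).degree v ^ k = ∑ a, #{b | f b = a} ^ k + Fintype.card β := by
  simp [Fintype.sum_sum_type, degree_starForest_inl, degree_starForest_inr]

end StarForest

section SigmaStarForest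

variable {ι : Type*} [Fintype ι] [DecidableEq ι] (m : ι → ℕ)

lemma card_filter_sigma_fst_eq (i : ι) : #{b : Σ i, Fin (m i) | b.1 = i} = m i := by
  rw [card_filter, Fintype.sum_sigma]
  simp [apply_ite]

theorem homCount_starGraph_starForest_sigmaFst (b : ℕ) :
    homCount (_root_.starGraph b) (starForest (Sigma.fst : (Σ i, Fin (m i)) → ι)) =
      ∑ i, m i ^ b + ∑ i, m i := by
  rw [homCount_starGraph, sum_degree_pow_starForest, Fintype.card_sigma]
  simp only [card_filter_sigma_fst_eq, Fintype.card_fin]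

end SigmaStarForest
section Asymptotics

variable {ι : Type*} [Fintype ι] {m : ℝ → ι → ℝ} {y : ι → ℝ}

theorem tendsto_sum_pow_add_sum_div_pow
    (hm : ∀ i, Tendsto (fun t => m t i / t) atTop (𝓝 (y i))) {k : ℕ} (hk : 2 ≤ k) :
    Tendsto (fun t => (∑ i, m t i ^ k + ∑ i, m t i) / t ^ k) atTop (𝓝 (∑ i, y i ^ k)) := by
  obtain ⟨k, rfl⟩ := Nat.exists_eq_add_of_le' hk
  have hlim := (tendsto_finsetSum univ fun i _ => (hm i).pow (k + 2)).add
    ((tendsto_finsetSum univ fun i _ => hm i).mul (tendsto_inv_atTop_zero.pow (k + 1)))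
  rw [zero_pow k.succ_ne_zero, mul_zero, add_zero] at hlim
  refine hlim.congr fun t => ?_
  rw [add_div, ← sum_div, inv_pow, ← div_eq_mul_inv, div_div, ← pow_succ']
  simp only [div_pow, ← sum_div]

theorem tendsto_sum_pow_add_sum_div_sum_sq_add_sum_pow
    (hm : ∀ i, Tendsto (fun t => m t i / t) atTop (𝓝 (y i))) (hy : ∑ i, y i ^ 2 = 1) {k : ℕ}
    (hk : k ≠ 0) :
    Tendsto (fun t => (∑ i, m t i ^ (2 * k) + ∑ i, m t i) / (∑ i, m t i ^ 2 + ∑ i, m t i) ^ k)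
      atTop (𝓝 (∑ i, y i ^ (2 * k))) := by
  have hnum := tendsto_sum_pow_add_sum_div_pow hm (k := 2 * k) (by omega)
  have hden := (tendsto_sum_pow_add_sum_div_pow hm le_rfl).pow k
  rw [hy, one_pow] at hden
  refine (div_one (∑ i, y i ^ (2 * k)) ▸ hnum.div hden one_ne_zero).congr' ?_
  filter_upwards [eventually_gt_atTop 0] with t ht
  rw [Pi.div_apply, div_pow _ (t ^ 2), ← pow_mul, div_div_div_cancel_right₀ (by positivity)]

end Asymptotics

section Profiles

def starRatioPoints (ℓ : ℕ) : Set (Fin (ℓ - 1) → ℝ) :=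
  {v | ∃ (V : Type) (_ : Fintype V) (G : SimpleGraph V) (_ : DecidableRel G.Adj),
    G.edgeSet.Nonempty ∧
    ∀ j : Fin (ℓ - 1), v j =
      (homCount (_root_.starGraph (2 * ((j : ℕ) + 2))) G : ℝ) /
        (homCount (_root_.starGraph 2) G : ℝ) ^ ((j : ℕ) + 2)}

def powerSumPoints (ℓ : ℕ) : Set (Fin (ℓ - 1) → ℝ) :=
  {v | ∃ (n : ℕ) (x : Fin n → ℝ), (∀ i, 0 ≤ x i) ∧ (∑ i, x i) = 1 ∧
    ∀ j : Fin (ℓ - 1), v j = ∑ i, x i ^ ((j : ℕ) + 2)}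

theorem starRatioPoints_subset_powerSumPoints (ℓ : ℕ) : starRatioPoints ℓ ⊆ powerSumPoints ℓ := by
  rintro v ⟨V, _, G, _, hG, hv⟩
  let e := (Fintype.equivFin V).symm
  refine ⟨Fintype.card V, fun i => (G.degree (e i) : ℝ) ^ 2 / ∑ u, (G.degree u : ℝ) ^ 2,
    fun i => by positivity, ?_, fun j => ?_⟩
  · rw [e.sum_comp (fun u => (G.degree u : ℝ) ^ 2 / _), sum_degree_sq_div_sum_eq_one G hG]
  · rw [hv j, homCount_starGraph_div_pow, ← e.sum_comp]

theorem powerSumPoints_subset_closure_starRatioPoints (ℓ : ℕ) :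
    powerSumPoints ℓ ⊆ closure (starRatioPoints ℓ) := by
  rintro v ⟨n, x, hx0, hx1, hv⟩
  let m : ℝ → Fin n → ℕ := fun t i => ⌊√(x i) * t⌋₊
  let G t := starForest (Sigma.fst : (Σ i, Fin (m t i)) → Fin n)
  have hm : ∀ i, Tendsto (fun t => (m t i : ℝ) / t) atTop (𝓝 √(x i)) :=
    fun i => tendsto_nat_floor_mul_div_atTop (Real.sqrt_nonneg _)
  have hy : ∑ i, √(x i) ^ 2 = 1 := by simp only [Real.sq_sqrt (hx0 _), hx1]
  have hratio : ∀ k ≠ 0, Tendsto (fun t => (homCount (_root_.starGraph (2 * k)) (G t) : ℝ) /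
      (homCount (_root_.starGraph 2) (G t) : ℝ) ^ k) atTop (𝓝 (∑ i, x i ^ k)) := fun k hk => by
    simpa only [G, homCount_starGraph_starForest_sigmaFst, Nat.cast_add, Nat.cast_sum, Nat.cast_pow,
      pow_mul, Real.sq_sqrt (hx0 _)] using tendsto_sum_pow_add_sum_div_sum_sq_add_sum_pow hm hy hk
  have hedge : ∀ᶠ t in atTop, (G t).edgeSet.Nonempty := by
    filter_upwards [(tendsto_sum_pow_add_sum_div_pow hm le_rfl).eventually_const_lt
      (hy ▸ one_pos)] with t ht
    rw [edgeSet_nonempty_iff_sum_degree_pow_pos _ two_ne_zero, ← homCount_starGraph,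
      homCount_starGraph_starForest_sigmaFst]
    have : (0 : ℝ) < ∑ i, (m t i : ℝ) ^ 2 + ∑ i, (m t i : ℝ) := by
      by_contra! h
      exact ht.not_ge (div_nonpos_of_nonpos_of_nonneg h (sq_nonneg t))
    exact_mod_cast this
  rw [show v = _ from funext hv]
  exact mem_closure_of_tendsto (tendsto_pi_nhds.2 fun j => hratio _ (by omega))
    (hedge.mono fun t ht => ⟨_, inferInstance, G t, inferInstance, ht, fun j => rfl⟩)

end Profiles

theorem star_ratio_profile_eq_powerSumProfile_general (ℓ : ℕ) :
    (closure {v : Fin (ℓ - 1) → ℝ |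
        ∃ (V : Type) (_ : Fintype V) (G : SimpleGraph V) (_ : DecidableRel G.Adj),
          G.edgeSet.Nonempty ∧
          ∀ j : Fin (ℓ - 1), v j =
            (homCount (_root_.starGraph (2 * ((j : ℕ) + 2))) G : ℝ) /
              (homCount (_root_.starGraph 2) G : ℝ) ^ ((j : ℕ) + 2)} = powerSumProfile ℓ) ∧
      ∀ (V : Type) (_ : Fintype V) (G : SimpleGraph V) (_ : DecidableRel G.Adj),
        G.edgeSet.Nonempty →
        (∀ v : V, 0 ≤ (G.degree v : ℝ) ^ 2 / ∑ u : V, (G.degree u : ℝ) ^ 2) ∧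
        (∑ v : V, (G.degree v : ℝ) ^ 2 / ∑ u : V, (G.degree u : ℝ) ^ 2) = 1 ∧
        ∀ j : ℕ, 2 ≤ j → j ≤ ℓ →
          (homCount (_root_.starGraph (2 * j)) G : ℝ) / (homCount (_root_.starGraph 2) G : ℝ) ^ j =
            ∑ v : V, ((G.degree v : ℝ) ^ 2 / ∑ u : V, (G.degree u : ℝ) ^ 2) ^ j := by
  refine ⟨?_, fun V _ G _ hG => ⟨fun v => by positivity, sum_degree_sq_div_sum_eq_one G hG,
    fun j _ _ => homCount_starGraph_div_pow G j⟩⟩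
  exact (closure_mono (starRatioPoints_subset_powerSumPoints ℓ)).antisymm
    (closure_minimal (powerSumPoints_subset_closure_starRatioPoints ℓ) isClosed_closure)

/-- The star ratio profile (`k = 2` case): the closure of the points
`(hom(K_{1,2j};G)/hom(K_{1,2};G)^j)_{j=2,…,ℓ}` over all finite simple graphs `G` with at
least one edge equals `Π_ℓ`; moreover for every such `G` the normalized squared degrees
`x_v = d(v)^2/Σ_u d(u)^2` witness the point as a power-sum vector. -/
theorem star_ratio_profile_eq_powerSumProfile (ℓ : ℕ) (hℓ : 2 ≤ ℓ) :
    (closure {v : Fin (ℓ - 1) → ℝ |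
        ∃ (V : Type) (_ : Fintype V) (G : SimpleGraph V) (_ : DecidableRel G.Adj),
          G.edgeSet.Nonempty ∧
          ∀ j : Fin (ℓ - 1), v j =
            (homCount (_root_.starGraph (2 * ((j : ℕ) + 2))) G : ℝ) /
              (homCount (_root_.starGraph 2) G : ℝ) ^ ((j : ℕ) + 2)} = powerSumProfile ℓ) ∧
      ∀ (V : Type) (_ : Fintype V) (G : SimpleGraph V) (_ : DecidableRel G.Adj),
        G.edgeSet.Nonempty →
        (∀ v : V, 0 ≤ (G.degree v : ℝ) ^ 2 / ∑ u : V, (G.degree u : ℝ) ^ 2) ∧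
        (∑ v : V, (G.degree v : ℝ) ^ 2 / ∑ u : V, (G.degree u : ℝ) ^ 2) = 1 ∧
        ∀ j : ℕ, 2 ≤ j → j ≤ ℓ →
          (homCount (_root_.starGraph (2 * j)) G : ℝ) / (homCount (_root_.starGraph 2) G : ℝ) ^ j =
            ∑ v : V, ((G.degree v : ℝ) ^ 2 / ∑ u : V, (G.degree u : ℝ) ^ 2) ^ j :=
  star_ratio_profile_eq_powerSumProfile_general ℓ
end
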